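/- arXiv:2304.02241 — 2 statements merged into one kernel-verified Lean document; each statement's English description precedes it below -/
import Mathlib

section
/- With the coherent oracle c𝔘 as defined in the context, for every w ∈ W and every k ∈ Fin N, c𝔘 applied to |1⟩ ⊗ u ⊗ w ⊗ k̂ equals |1⟩ ⊗ u ⊗ w ⊗ ((k+1) mod N)̂, where k̂ denotes the Fourier basis vector (1/√N) ∑_{y ∈ Fin N} ω_N^{k·y} • e_y in EuclideanSpace ℂ (Fin N). That is, each query increments the counter register by one in the Fourier basis when the control qubit is |1⟩ and the eigenstate register holds u. -/
open scoped TensorProduct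

noncomputable section

/-- `ω N = exp(2πi/N)`, the primitive `N`-th root of unity. -/
def ω (N : ℕ) : ℂ := Complex.exp (2 * Real.pi * Complex.I / N)

/-- The computational (standard) basis vector `e_y` of `EuclideanSpace ℂ (Fin N)`. -/
def e (N : ℕ) (y : Fin N) : EuclideanSpace ℂ (Fin N) := EuclideanSpace.single y 1

/-- The Fourier basis vector `k̂ = (1/√N) ∑_y ω_N^{k·y} • e_y`. -/
def fHat (N : ℕ) (k : Fin N) : EuclideanSpace ℂ (Fin N) :=
  (↑(Real.sqrt N))⁻¹ • ∑ y : Fin N, ω N ^ ((k : ℕ) * (y : ℕ)) • e N y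

/-- The rank-one operator `|v⟩⟨w| : x ↦ ⟨w, x⟩ • v`. -/
def outer {E : Type*} [NormedAddCommGroup E] [InnerProductSpace ℂ E] (v w : E) :
    E →ₗ[ℂ] E :=
  LinearMap.toSpanSingleton ℂ E v ∘ₗ (innerSL ℂ w).toLinearMap

variable {V : Type*} [NormedAddCommGroup V] [InnerProductSpace ℂ V] [FiniteDimensional ℂ V]
variable {W : Type*} [NormedAddCommGroup W] [InnerProductSpace ℂ W] [FiniteDimensional ℂ W]

/-- `P_u`, the orthogonal projection onto the line `ℂ ∙ u`, as an endomorphism of `V`. -/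
def Pu (u : V) : V →ₗ[ℂ] V :=
  (ℂ ∙ u).subtype ∘ₗ ((ℂ ∙ u).orthogonalProjectionOnto).toLinearMap

/-- `U_y = ω_N^y • P_u + (id - P_u)` on `V`. -/
def Uy (N : ℕ) (u : V) (y : Fin N) : V →ₗ[ℂ] V :=
  ω N ^ (y : ℕ) • Pu u + (LinearMap.id - Pu u)

/-- The controlled unitary `cU_y = |0⟩⟨0| ⊗ id_V + |1⟩⟨1| ⊗ U_y` on `ℂ² ⊗ V`. -/
def cUy (N : ℕ) (u : V) (y : Fin N) :
    (EuclideanSpace ℂ (Fin 2) ⊗[ℂ] V) →ₗ[ℂ] (EuclideanSpace ℂ (Fin 2) ⊗[ℂ] V) :=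
  TensorProduct.map (outer (e 2 0) (e 2 0)) LinearMap.id
    + TensorProduct.map (outer (e 2 1) (e 2 1)) (Uy N u y)

/-- The coherent oracle `c𝔘 = ∑_y (cU_y ⊗ id_W) ⊗ |e_y⟩⟨e_y|` on
`(ℂ² ⊗ V ⊗ W) ⊗ EuclideanSpace ℂ (Fin N)`. -/
def cOracle (N : ℕ) (u : V) (W : Type*) [NormedAddCommGroup W] [InnerProductSpace ℂ W] :
    (((EuclideanSpace ℂ (Fin 2) ⊗[ℂ] V) ⊗[ℂ] W) ⊗[ℂ] EuclideanSpace ℂ (Fin N)) →ₗ[ℂ]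
    (((EuclideanSpace ℂ (Fin 2) ⊗[ℂ] V) ⊗[ℂ] W) ⊗[ℂ] EuclideanSpace ℂ (Fin N)) :=
  ∑ y : Fin N,
    TensorProduct.map (TensorProduct.map (cUy N u y) LinearMap.id) (outer (e N y) (e N y))

/-!
On `|1⟩ ⊗ u ⊗ w ⊗ e_y` the oracle acts by the scalar `ω^y`, since `u` is an eigenvector of `U_y`
with eigenvalue `ω^y`. Such a diagonal operator multiplies the `y`-th coefficient `ω^{k y}` of `k̂`
by `ω^y`, giving `ω^{(k+1) y}`; the reduction of `k + 1` modulo `N` is invisible since `ω^N = 1`.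
-/

lemma ω_isPrimitiveRoot (N : ℕ) [NeZero N] : IsPrimitiveRoot (ω N) N :=
  Complex.isPrimitiveRoot_exp N (NeZero.ne N)

lemma ω_pow_mul_mul_ω_pow {N : ℕ} [NeZero N] (k y : Fin N) :
    ω N ^ ((k : ℕ) * y) * ω N ^ (y : ℕ) = ω N ^ (((k + 1 : Fin N) : ℕ) * y) := by
  have hω : ω N ^ N = 1 := (ω_isPrimitiveRoot N).pow_eq_one
  rw [← pow_add, pow_eq_pow_mod _ hω, pow_eq_pow_mod (_ * _) hω, Fin.val_add, Fin.val_one',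
    Nat.add_mod_mod, Nat.mod_mul_mod]
  ring_nf

lemma apply_tmul_fHat_of_apply_tmul_e {X : Type*} [AddCommGroup X] [Module ℂ X]
    {N : ℕ} [NeZero N]
    (T : X ⊗[ℂ] EuclideanSpace ℂ (Fin N) →ₗ[ℂ] X ⊗[ℂ] EuclideanSpace ℂ (Fin N)) (x : X)
    (hT : ∀ y, T (x ⊗ₜ e N y) = ω N ^ (y : ℕ) • x ⊗ₜ e N y) (k : Fin N) :
    T (x ⊗ₜ fHat N k) = x ⊗ₜ fHat N (k + 1) := by
  simp only [fHat, TensorProduct.tmul_smul, TensorProduct.tmul_sum,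
    LinearMap.map_smul_of_tower, map_sum, map_smul, hT, smul_smul, ω_pow_mul_mul_ω_pow]

section

omit [FiniteDimensional ℂ V] [FiniteDimensional ℂ W]

lemma Pu_apply_self (u : V) : Pu u u = u :=
  Submodule.starProjection_eq_self_iff.mpr (Submodule.mem_span_singleton_self u)

lemma Uy_apply_self {N : ℕ} (u : V) (y : Fin N) : Uy N u y u = ω N ^ (y : ℕ) • u := by
  simp [Uy, Pu_apply_self]

lemma outer_e_apply_e {n : ℕ} (i j : Fin n) :
    outer (e n i) (e n i) (e n j) = if i = j then e n i else 0 := by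
  simp only [outer, e, LinearMap.comp_apply, ContinuousLinearMap.coe_coe, innerSL_apply_apply,
    LinearMap.toSpanSingleton_apply, EuclideanSpace.inner_single_left, PiLp.single_apply]
  split_ifs <;> simp

lemma cUy_apply_tmul_self {N : ℕ} (u : V) (y : Fin N) :
    cUy N u y (e 2 1 ⊗ₜ u) = ω N ^ (y : ℕ) • e 2 1 ⊗ₜ u := by
  simp [cUy, outer_e_apply_e, Uy_apply_self, TensorProduct.tmul_smul]

lemma cOracle_apply_tmul_e {N : ℕ} (u : V) (w : W) (y : Fin N) :
    cOracle N u W (((e 2 1 ⊗ₜ u) ⊗ₜ w) ⊗ₜ e N y)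
      = ω N ^ (y : ℕ) • ((e 2 1 ⊗ₜ u) ⊗ₜ w) ⊗ₜ e N y := by
  rw [cOracle, LinearMap.sum_apply, Finset.sum_eq_single y]
  · simp [outer_e_apply_e, cUy_apply_tmul_self, TensorProduct.smul_tmul']
  · intro z _ hzy
    simp [outer_e_apply_e, hzy]
  · simp

end

theorem stmt_3_general {N : ℕ} [NeZero N] (u : V) (w : W) (k : Fin N) :
    cOracle N u W (((e 2 1 ⊗ₜ[ℂ] u) ⊗ₜ[ℂ] w) ⊗ₜ[ℂ] fHat N k)
      = ((e 2 1 ⊗ₜ[ℂ] u) ⊗ₜ[ℂ] w) ⊗ₜ[ℂ] fHat N (k + 1) :=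
  apply_tmul_fHat_of_apply_tmul_e _ _ (cOracle_apply_tmul_e u w) k

/-- Each query increments the counter register by one in the Fourier basis when the control
qubit is `|1⟩` and the eigenstate register holds `u`:
`c𝔘 (|1⟩ ⊗ u ⊗ w ⊗ k̂) = |1⟩ ⊗ u ⊗ w ⊗ ((k+1) mod N)^`. -/
theorem stmt_3 {N : ℕ} [NeZero N] (u : V) (hu : ‖u‖ = 1) (w : W) (k : Fin N) :
    cOracle N u W (((e 2 1 ⊗ₜ[ℂ] u) ⊗ₜ[ℂ] w) ⊗ₜ[ℂ] fHat N k)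
      = ((e 2 1 ⊗ₜ[ℂ] u) ⊗ₜ[ℂ] w) ⊗ₜ[ℂ] fHat N (k + 1) :=
  stmt_3_general u w k
end
end

section
/- (Controlled-add step of the phase estimation algorithm of Cleve–Ekert–Macchiavello–Mosca.) Let N ≥ 1 and let D := ∑_{y ∈ Fin N} ω_N^y • |e_y⟩⟨e_y| be the diagonal unitary on EuclideanSpace ℂ (Fin N). Define the controlled-add operator CADD := ∑_{y ∈ Fin N} |e_y⟩⟨e_y| ⊗ D^y on EuclideanSpace ℂ (Fin N) ⊗ EuclideanSpace ℂ (Fin N). Then CADD applied to (1/√N) ∑_{y ∈ Fin N} e_y ⊗ 0̂ equals (1/√N) ∑_{y ∈ Fin N} e_y ⊗ ŷ, where k̂ := (1/√N) ∑_{y' ∈ Fin N} ω_N^{k·y'} • e_{y'} denotes the k-th Fourier basis vector and 0̂ is the uniform superposition. -/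
open scoped TensorProduct

noncomputable section

/-- The diagonal unitary `D = ∑_y ω_N^y • |e_y⟩⟨e_y|` on `EuclideanSpace ℂ (Fin N)`. -/
def Dop (N : ℕ) : Module.End ℂ (EuclideanSpace ℂ (Fin N)) :=
  ∑ y : Fin N, ω N ^ (y : ℕ) • outer (e N y) (e N y)

/-- The controlled-add operator `CADD = ∑_y |e_y⟩⟨e_y| ⊗ D^y` on
`EuclideanSpace ℂ (Fin N) ⊗ EuclideanSpace ℂ (Fin N)`. -/
def CADD (N : ℕ) :
    (EuclideanSpace ℂ (Fin N) ⊗[ℂ] EuclideanSpace ℂ (Fin N)) →ₗ[ℂ]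
    (EuclideanSpace ℂ (Fin N) ⊗[ℂ] EuclideanSpace ℂ (Fin N)) :=
  ∑ y : Fin N, TensorProduct.map (outer (e N y) (e N y)) (Dop N ^ (y : ℕ))


lemma outer_e_apply {N : ℕ} (x y : Fin N) :
    outer (e N x) (e N x) (e N y) = if x = y then e N x else 0 := by
  simp only [outer, LinearMap.comp_apply, ContinuousLinearMap.coe_coe, innerSL_apply_apply,
    LinearMap.toSpanSingleton_apply, e]
  rw [EuclideanSpace.inner_single_left]
  simp [EuclideanSpace.single_apply]

lemma Dop_apply_e {N : ℕ} (y : Fin N) : Dop N (e N y) = ω N ^ (y : ℕ) • e N y := by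
  simp only [Dop, LinearMap.sum_apply, LinearMap.smul_apply, outer_e_apply]
  rw [Finset.sum_eq_single y] <;> simp (config := {contextual := true}) [eq_comm]

lemma Dop_pow_apply_e {N : ℕ} (k : ℕ) (y : Fin N) :
    (Dop N ^ k) (e N y) = ω N ^ ((y : ℕ) * k) • e N y := by
  induction k with
  | zero => simp
  | succ k ih =>
    rw [pow_succ', Module.End.mul_apply, ih, map_smul, Dop_apply_e, smul_smul,
      ← pow_add, Nat.mul_succ]

lemma Dop_pow_fHat {N : ℕ} [NeZero N] (y : Fin N) : (Dop N ^ (y : ℕ)) (fHat N 0) = fHat N y := by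
  rw [fHat, fHat, LinearMap.map_smul_of_tower, map_sum]
  congr 1
  refine Finset.sum_congr rfl fun z _ => ?_
  simp [Dop_pow_apply_e, Nat.mul_comm]

lemma CADD_tmul {N : ℕ} [NeZero N] (y : Fin N) :
    CADD N (e N y ⊗ₜ[ℂ] fHat N 0) = e N y ⊗ₜ[ℂ] fHat N y := by
  simp only [CADD, LinearMap.sum_apply, TensorProduct.map_tmul, outer_e_apply]
  rw [Finset.sum_eq_single y]
  · simp [Dop_pow_fHat]
  · intro b _ hb; simp [hb]
  · simp

/-- **Controlled-add step of the Cleve–Ekert–Macchiavello–Mosca phase estimation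
algorithm:** `CADD ((1/√N) ∑_y e_y ⊗ 0̂) = (1/√N) ∑_y e_y ⊗ ŷ`. -/
theorem stmt_14 {N : ℕ} [NeZero N] :
    CADD N ((↑(Real.sqrt N))⁻¹ • ∑ y : Fin N, e N y ⊗ₜ[ℂ] fHat N 0)
      = (↑(Real.sqrt N))⁻¹ • ∑ y : Fin N, e N y ⊗ₜ[ℂ] fHat N y := by
  rw [LinearMap.map_smul_of_tower, map_sum]
  simp only [CADD_tmul]

end
end
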